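/- Let B₀ ∈ ℝ^{n×n} and A₀ ∈ ℝ^{m×m} be symmetric positive definite, with c₁,…,c_n ∈ ℝⁿ the columns of the symmetric square root B₀^{1/2} and d₁,…,d_m ∈ ℝ^m the columns of A₀^{1/2}. Then for every matrix U ∈ {0,1}^{n×m} and all unit vectors q, h ∈ S^{n−1}, the mn×mn matrix A_{qh}^◇ = (1/2) Σ_{k=1}^m Σ_{i≠j} U_{ik} U_{jk} (q_i h_j + q_j h_i) (c_i c_jᵀ) ⊗ (d_k d_kᵀ) satisfies ‖A_{qh}^◇‖₂ ≤ ‖A₀‖₂ ‖B₀‖₂. In particular, taking h = q, ‖A_{qq}^◇‖₂ ≤ ‖A₀‖₂ ‖B₀‖₂ for every q ∈ S^{n−1}. -/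

import Mathlib

open MeasureTheory Matrix Finset
open scoped Kronecker

/-- Euclidean (ℓ₂) norm of a vector. -/
noncomputable def e2 {ι : Type*} [Fintype ι] (v : ι → ℝ) : ℝ :=
  Real.sqrt (∑ i, v i ^ 2)

/-- Operator (spectral) norm of a matrix. -/
noncomputable def opNorm {α β : Type*} [Fintype α] [Fintype β]
    (M : Matrix α β ℝ) : ℝ :=
  sSup {r | ∃ q : β → ℝ, e2 q ≤ 1 ∧ r = e2 (M.mulVec q)}

/-- The matrix `A_{qh}^◇ = (1/2) Σ_k Σ_{i≠j} U_{ik} U_{jk} (q_i h_j + q_j h_i)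
(c_i c_jᵀ) ⊗ (d_k d_kᵀ)`, where `c_i` are the columns of `B₀^{1/2}` and `d_k` the
columns of `A₀^{1/2}`. -/
noncomputable def Adm {n m : ℕ} (c : Fin n → Fin n → ℝ) (d : Fin m → Fin m → ℝ)
    (U : Matrix (Fin n) (Fin m) ℝ) (q h : Fin n → ℝ) :
    Matrix (Fin n × Fin m) (Fin n × Fin m) ℝ :=
  (1 / 2 : ℝ) • ∑ k, ∑ i, ∑ j,
    (if i = j then 0 else U i k * U j k * (q i * h j + q j * h i)) •
      (Matrix.vecMulVec (c i) (c j) ⊗ₖ Matrix.vecMulVec (d k) (d k))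

section Helpers

lemma e2_nonneg {ι : Type*} [Fintype ι] (v : ι → ℝ) : 0 ≤ e2 v := Real.sqrt_nonneg _

lemma e2_sq {ι : Type*} [Fintype ι] (v : ι → ℝ) : (e2 v) ^ 2 = ∑ i, v i ^ 2 :=
  Real.sq_sqrt (Finset.sum_nonneg fun _ _ => sq_nonneg _)

lemma e2_zero {ι : Type*} [Fintype ι] : e2 (0 : ι → ℝ) = 0 := by
  simp [e2]

lemma sum_sq_le_one {ι : Type*} [Fintype ι] {v : ι → ℝ} (h : e2 v ≤ 1) :
    ∑ i, v i ^ 2 ≤ 1 := by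
  have := e2_sq v
  nlinarith [e2_nonneg v]

lemma e2_smul {ι : Type*} [Fintype ι] (c : ℝ) (v : ι → ℝ) :
    e2 (c • v) = |c| * e2 v := by
  simp only [e2, Pi.smul_apply, smul_eq_mul, mul_pow, ← Finset.mul_sum]
  rw [Real.sqrt_mul (sq_nonneg c), Real.sqrt_sq_eq_abs]

lemma opNorm_bddAbove {α β : Type*} [Fintype α] [Fintype β] (M : Matrix α β ℝ) :
    BddAbove {r | ∃ q : β → ℝ, e2 q ≤ 1 ∧ r = e2 (M.mulVec q)} := by
  refine ⟨Real.sqrt (∑ i, ∑ j, M i j ^ 2), ?_⟩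
  rintro r ⟨x, hx, rfl⟩
  have hx1 : ∑ j, x j ^ 2 ≤ 1 := sum_sq_le_one hx
  refine Real.sqrt_le_sqrt (Finset.sum_le_sum fun i _ => ?_)
  have hcs := Finset.sum_mul_sq_le_sq_mul_sq Finset.univ (fun j => M i j) x
  calc (M.mulVec x i) ^ 2 = (∑ j, M i j * x j) ^ 2 := by rfl
    _ ≤ (∑ j, M i j ^ 2) * ∑ j, x j ^ 2 := hcs
    _ ≤ (∑ j, M i j ^ 2) * 1 := by
        exact mul_le_mul_of_nonneg_left hx1 (Finset.sum_nonneg fun j _ => sq_nonneg _)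
    _ = ∑ j, M i j ^ 2 := mul_one _

lemma e2_mulVec_le_opNorm {α β : Type*} [Fintype α] [Fintype β] (M : Matrix α β ℝ)
    {x : β → ℝ} (hx : e2 x ≤ 1) : e2 (M.mulVec x) ≤ opNorm M :=
  le_csSup (opNorm_bddAbove M) ⟨x, hx, rfl⟩

lemma opNorm_nonneg {α β : Type*} [Fintype α] [Fintype β] (M : Matrix α β ℝ) :
    0 ≤ opNorm M := by
  have : (0:ℝ) ∈ {r | ∃ q : β → ℝ, e2 q ≤ 1 ∧ r = e2 (M.mulVec q)} :=
    ⟨0, by simp [e2_zero], by simp [Matrix.mulVec_zero, e2_zero]⟩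
  exact le_csSup (opNorm_bddAbove M) this

lemma e2_mulVec_le {α β : Type*} [Fintype α] [Fintype β] (M : Matrix α β ℝ)
    (x : β → ℝ) : e2 (M.mulVec x) ≤ opNorm M * e2 x := by
  rcases eq_or_lt_of_le (e2_nonneg x) with h0 | h0
  · have hs : ∑ i, x i ^ 2 = 0 := by
      have := e2_sq x; rw [← h0] at this; simpa using this.symm
    have hx0 : x = 0 := by
      funext i
      have h2 := (Finset.sum_eq_zero_iff_of_nonneg (fun j _ => sq_nonneg (x j))).1 hs
      have := pow_eq_zero_iff (n := 2) (by norm_num) |>.1 (h2 i (Finset.mem_univ i))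
      simpa using this
    simp [hx0, Matrix.mulVec_zero, e2_zero, ← h0]
  · set t := e2 x with ht
    have hxt : e2 (t⁻¹ • x) ≤ 1 := by
      rw [e2_smul, abs_of_pos (inv_pos.2 h0)]
      rw [inv_mul_cancel₀ (ne_of_gt h0)]
    have := e2_mulVec_le_opNorm M hxt
    rw [Matrix.mulVec_smul, e2_smul, abs_of_pos (inv_pos.2 h0)] at this
    calc e2 (M.mulVec x) = t * (t⁻¹ * e2 (M.mulVec x)) := by
          field_simp
      _ ≤ t * opNorm M := by
          exact mul_le_mul_of_nonneg_left this (le_of_lt h0)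
      _ = opNorm M * t := mul_comm _ _

lemma opNorm_le {α β : Type*} [Fintype α] [Fintype β] (M : Matrix α β ℝ) {C : ℝ}
    (hC : 0 ≤ C) (h : ∀ x : β → ℝ, e2 x ≤ 1 → e2 (M.mulVec x) ≤ C) :
    opNorm M ≤ C := by
  apply Real.sSup_le _ hC
  rintro r ⟨x, hx, rfl⟩
  exact h x hx

lemma quadform_expand {N : Type*} [Fintype N] (M : Matrix N N ℝ) (a b : N → ℝ) :
    (∑ p, ∑ p', (a p + b p) * M p p' * (a p' + b p'))
      = (∑ p, ∑ p', a p * M p p' * a p') + (∑ p, ∑ p', a p * M p p' * b p')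
        + (∑ p, ∑ p', b p * M p p' * a p') + (∑ p, ∑ p', b p * M p p' * b p') := by
  simp only [← Finset.sum_add_distrib]
  refine Finset.sum_congr rfl fun p _ => ?_
  refine Finset.sum_congr rfl fun p' _ => ?_
  ring

lemma quadform_expand_sub {N : Type*} [Fintype N] (M : Matrix N N ℝ) (a b : N → ℝ) :
    (∑ p, ∑ p', (a p - b p) * M p p' * (a p' - b p'))
      = (∑ p, ∑ p', a p * M p p' * a p') - (∑ p, ∑ p', a p * M p p' * b p')
        - (∑ p, ∑ p', b p * M p p' * a p') + (∑ p, ∑ p', b p * M p p' * b p') := by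
  simp only [← Finset.sum_add_distrib, ← Finset.sum_sub_distrib]
  refine Finset.sum_congr rfl fun p _ => ?_
  refine Finset.sum_congr rfl fun p' _ => ?_
  ring

lemma opNorm_le_of_quad {N : Type*} [Fintype N] (M : Matrix N N ℝ) {C : ℝ} (hC : 0 ≤ C)
    (hsym : ∀ p p', M p p' = M p' p)
    (hQ : ∀ x : N → ℝ, |∑ p, ∑ p', x p * M p p' * x p'| ≤ C * ∑ p, x p ^ 2) :
    opNorm M ≤ C := by
  apply opNorm_le M hC
  intro x hx
  set w := M.mulVec x with hw
  rcases eq_or_lt_of_le (e2_nonneg w) with h0 | h0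
  · rw [← h0]; exact hC
  · set t := e2 w with ht
    set y : N → ℝ := t⁻¹ • w with hy
    have hyx : ∑ p, ∑ p', y p * M p p' * x p' = t := by
      have h1 : ∀ p, ∑ p', y p * M p p' * x p' = y p * w p := by
        intro p
        have hwp : ∑ p', M p p' * x p' = w p := rfl
        rw [show ∑ p', y p * M p p' * x p' = y p * ∑ p', M p p' * x p' by
          rw [Finset.mul_sum]; exact Finset.sum_congr rfl fun p' _ => by ring]
        rw [hwp]
      have h2 : ∑ p, y p * w p = t⁻¹ * ∑ p, w p ^ 2 := by
        rw [Finset.mul_sum]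
        exact Finset.sum_congr rfl fun p _ => by simp [hy]; ring
      rw [Finset.sum_congr rfl fun p _ => h1 p, h2, ← e2_sq w, ← ht]
      field_simp
    have hysq : ∑ p, y p ^ 2 = 1 := by
      have : ∑ p, y p ^ 2 = t⁻¹ ^ 2 * ∑ p, w p ^ 2 := by
        rw [Finset.mul_sum]
        exact Finset.sum_congr rfl fun p _ => by simp [hy]; ring
      rw [this, ← e2_sq w, ← ht]
      field_simp
    have hsymm : ∑ p, ∑ p', x p * M p p' * y p' = ∑ p, ∑ p', y p * M p p' * x p' := by
      rw [Finset.sum_comm]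
      refine Finset.sum_congr rfl fun p _ => Finset.sum_congr rfl fun p' _ => ?_
      rw [hsym p' p]; ring
    have key : 4 * t ≤ 4 * C := by
      have hx1 : ∑ p, x p ^ 2 ≤ 1 := sum_sq_le_one hx
      have e1 := quadform_expand M y x
      have e2' := quadform_expand_sub M y x
      have hb1 := hQ (fun p => y p + x p)
      have hb2 := hQ (fun p => y p - x p)
      have hsum1 : ∑ p, (y p + x p) ^ 2 = ∑ p, y p ^ 2 + 2 * ∑ p, (y p * x p) + ∑ p, x p ^ 2 := by
        rw [Finset.mul_sum, ← Finset.sum_add_distrib, ← Finset.sum_add_distrib]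
        exact Finset.sum_congr rfl fun p _ => by ring
      have hsum2 : ∑ p, (y p - x p) ^ 2 = ∑ p, y p ^ 2 - 2 * ∑ p, (y p * x p) + ∑ p, x p ^ 2 := by
        rw [Finset.mul_sum, ← Finset.sum_sub_distrib, ← Finset.sum_add_distrib]
        exact Finset.sum_congr rfl fun p _ => by ring
      have hq1 : (∑ p, ∑ p', (y p + x p) * M p p' * (y p' + x p'))
          - (∑ p, ∑ p', (y p - x p) * M p p' * (y p' - x p')) = 4 * t := by
        rw [e1, e2', hsymm, hyx]; ring
      have habs1 : (∑ p, ∑ p', (y p + x p) * M p p' * (y p' + x p'))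
          ≤ C * ∑ p, (y p + x p) ^ 2 := le_trans (le_abs_self _) hb1
      have habs2 : -(∑ p, ∑ p', (y p - x p) * M p p' * (y p' - x p'))
          ≤ C * ∑ p, (y p - x p) ^ 2 := le_trans (neg_le_abs _) hb2
      have hSsum : ∑ p, (y p + x p) ^ 2 + ∑ p, (y p - x p) ^ 2 ≤ 4 := by
        rw [hsum1, hsum2, hysq]; linarith
      have hCS : C * ∑ p, (y p + x p) ^ 2 + C * ∑ p, (y p - x p) ^ 2 ≤ C * 4 := by
        rw [← mul_add]
        exact mul_le_mul_of_nonneg_left hSsum hC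
      linarith
    linarith

lemma key_k {n : ℕ} (u q h y : Fin n → ℝ) :
    (∑ i, ∑ j, (if i = j then 0 else u i * u j * (q i * h j + q j * h i)) * (y i * y j))
      = 2 * ((∑ i, q i * (u i * y i)) * (∑ i, h i * (u i * y i))
        - ∑ i, q i * h i * (u i * y i) ^ 2) := by
  have h1 : ∀ i j : Fin n, (if i = j then (0:ℝ) else u i * u j * (q i * h j + q j * h i)) * (y i * y j)
      = u i * u j * (q i * h j + q j * h i) * (y i * y j)
        - (if i = j then u i * u j * (q i * h j + q j * h i) * (y i * y j) else 0) := by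
    intro i j; split_ifs <;> ring
  simp only [h1, Finset.sum_sub_distrib]
  have h2 : ∀ i : Fin n, (∑ j, if i = j then u i * u j * (q i * h j + q j * h i) * (y i * y j) else 0)
      = u i * u i * (q i * h i + q i * h i) * (y i * y i) := by
    intro i; simp
  rw [Finset.sum_congr rfl fun i _ => h2 i]
  have h3 : (∑ i, ∑ j, u i * u j * (q i * h j + q j * h i) * (y i * y j))
      = 2 * ((∑ i, q i * (u i * y i)) * (∑ i, h i * (u i * y i))) := by
    have expand : ∀ i j : Fin n, u i * u j * (q i * h j + q j * h i) * (y i * y j)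
        = (q i * (u i * y i)) * (h j * (u j * y j)) + (q j * (u j * y j)) * (h i * (u i * y i)) := by
      intro i j; ring
    simp only [expand, Finset.sum_add_distrib]
    rw [← Finset.sum_mul_sum]
    rw [Finset.sum_comm]
    rw [← Finset.sum_mul_sum]
    ring
  rw [h3]
  have h4 : (∑ i, u i * u i * (q i * h i + q i * h i) * (y i * y i))
      = 2 * ∑ i, q i * h i * (u i * y i) ^ 2 := by
    rw [Finset.mul_sum]
    exact Finset.sum_congr rfl fun i _ => by ring
  rw [h4]; ring

lemma bound_k {n : ℕ} (q h z : Fin n → ℝ) (hq : ∑ i, q i ^ 2 = 1) (hh : ∑ i, h i ^ 2 = 1) :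
    |(∑ i, q i * z i) * (∑ i, h i * z i) - ∑ i, q i * h i * z i ^ 2| ≤ ∑ i, z i ^ 2 := by
  set u : Fin n → ℝ := fun i => (q i + h i) / 2 with hu
  set v : Fin n → ℝ := fun i => (q i - h i) / 2 with hv
  have e1 : (∑ i, q i * z i) = (∑ i, u i * z i) + ∑ i, v i * z i := by
    rw [← Finset.sum_add_distrib]
    exact Finset.sum_congr rfl fun i _ => by simp [hu, hv]; ring
  have e2 : (∑ i, h i * z i) = (∑ i, u i * z i) - ∑ i, v i * z i := by
    rw [← Finset.sum_sub_distrib]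
    exact Finset.sum_congr rfl fun i _ => by simp [hu, hv]; ring
  have e3 : (∑ i, q i * h i * z i ^ 2) = (∑ i, u i ^ 2 * z i ^ 2) - ∑ i, v i ^ 2 * z i ^ 2 := by
    rw [← Finset.sum_sub_distrib]
    exact Finset.sum_congr rfl fun i _ => by simp [hu, hv]; ring
  have huv : (∑ i, u i ^ 2) + (∑ i, v i ^ 2) = 1 := by
    rw [← Finset.sum_add_distrib]
    have : ∀ i : Fin n, u i ^ 2 + v i ^ 2 = (q i ^ 2 + h i ^ 2) / 2 := by
      intro i; simp [hu, hv]; ring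
    rw [Finset.sum_congr rfl fun i _ => this i]
    rw [← Finset.sum_div, Finset.sum_add_distrib, hq, hh]
    norm_num
  have hz : (0:ℝ) ≤ ∑ i, z i ^ 2 := Finset.sum_nonneg fun i _ => sq_nonneg _
  have bnd : ∀ w : Fin n → ℝ,
      |(∑ i, w i * z i) ^ 2 - ∑ i, w i ^ 2 * z i ^ 2| ≤ (∑ i, w i ^ 2) * ∑ i, z i ^ 2 := by
    intro w
    have hcs := Finset.sum_mul_sq_le_sq_mul_sq Finset.univ w z
    have hd : (∑ i, w i ^ 2 * z i ^ 2) ≤ (∑ i, w i ^ 2) * ∑ i, z i ^ 2 := by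
      rw [Finset.sum_mul]
      refine Finset.sum_le_sum fun i _ => ?_
      refine mul_le_mul_of_nonneg_left ?_ (sq_nonneg _)
      exact Finset.single_le_sum (fun j _ => sq_nonneg (z j)) (Finset.mem_univ i)
    have hd0 : (0:ℝ) ≤ ∑ i, w i ^ 2 * z i ^ 2 :=
      Finset.sum_nonneg fun i _ => mul_nonneg (sq_nonneg _) (sq_nonneg _)
    rw [abs_le]
    constructor <;> nlinarith [sq_nonneg (∑ i, w i * z i)]
  have hexp : (∑ i, q i * z i) * (∑ i, h i * z i) - ∑ i, q i * h i * z i ^ 2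
      = ((∑ i, u i * z i) ^ 2 - ∑ i, u i ^ 2 * z i ^ 2)
        - ((∑ i, v i * z i) ^ 2 - ∑ i, v i ^ 2 * z i ^ 2) := by
    rw [e1, e2, e3]; ring
  rw [hexp]
  calc |_| ≤ |(∑ i, u i * z i) ^ 2 - ∑ i, u i ^ 2 * z i ^ 2|
        + |(∑ i, v i * z i) ^ 2 - ∑ i, v i ^ 2 * z i ^ 2| := abs_sub _ _
    _ ≤ (∑ i, u i ^ 2) * (∑ i, z i ^ 2) + (∑ i, v i ^ 2) * ∑ i, z i ^ 2 :=
        add_le_add (bnd u) (bnd v)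
    _ = ((∑ i, u i ^ 2) + ∑ i, v i ^ 2) * ∑ i, z i ^ 2 := by ring
    _ = ∑ i, z i ^ 2 := by rw [huv, one_mul]

lemma sum_swap3 {α β γ : Type*} [Fintype α] [Fintype β] [Fintype γ] (f : α → β → γ → ℝ) :
    ∑ a, ∑ b, ∑ c, f a b c = ∑ c, ∑ a, ∑ b, f a b c := by
  rw [show (∑ a, ∑ b, ∑ c, f a b c) = ∑ a, ∑ c, ∑ b, f a b c from
    Finset.sum_congr rfl fun a _ => Finset.sum_comm]
  exact Finset.sum_comm

lemma sum_swap5 {α β γ δ ε : Type*} [Fintype α] [Fintype β] [Fintype γ] [Fintype δ] [Fintype ε]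
    (f : α → β → γ → δ → ε → ℝ) :
    ∑ a, ∑ b, ∑ c, ∑ d, ∑ e, f a b c d e = ∑ c, ∑ d, ∑ e, ∑ a, ∑ b, f a b c d e := by
  calc ∑ a, ∑ b, ∑ c, ∑ d, ∑ e, f a b c d e
      = ∑ c, ∑ a, ∑ b, ∑ d, ∑ e, f a b c d e :=
        sum_swap3 (fun a b c => ∑ d, ∑ e, f a b c d e)
    _ = ∑ c, ∑ d, ∑ a, ∑ b, ∑ e, f a b c d e :=
        Finset.sum_congr rfl fun c _ => sum_swap3 (fun a b d => ∑ e, f a b c d e)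
    _ = ∑ c, ∑ d, ∑ e, ∑ a, ∑ b, f a b c d e :=
        Finset.sum_congr rfl fun c _ => Finset.sum_congr rfl fun d _ =>
          sum_swap3 (fun a b e => f a b c d e)

lemma sqsum_mulVec_le {N : Type*} [Fintype N] (Bsq B : Matrix N N ℝ)
    (hsym : ∀ i j, Bsq i j = Bsq j i) (hBB : Bsq * Bsq = B) (w : N → ℝ) :
    ∑ i, (∑ r, Bsq r i * w r) ^ 2 ≤ opNorm B * ∑ r, w r ^ 2 := by
  have step1 : ∑ i, (∑ r, Bsq r i * w r) ^ 2 = ∑ r, w r * (B.mulVec w r) := by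
    have h1 : ∀ i, (∑ r, Bsq r i * w r) ^ 2 = ∑ r, ∑ r', (Bsq r i * w r) * (Bsq r' i * w r') := by
      intro i; rw [sq, Finset.sum_mul_sum]
    rw [Finset.sum_congr rfl fun i _ => h1 i, sum_swap3]
    refine Finset.sum_congr rfl fun r _ => ?_
    rw [Finset.sum_comm]
    have h2 : ∀ b, ∑ a, Bsq b a * w b * (Bsq r a * w r) = w r * (B r b * w b) := by
      intro b
      have hB : ∑ a, Bsq r a * Bsq a b = B r b := by rw [← hBB, Matrix.mul_apply]
      calc ∑ a, Bsq b a * w b * (Bsq r a * w r)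
          = (∑ a, Bsq r a * Bsq a b) * (w b * w r) := by
            rw [Finset.sum_mul]
            exact Finset.sum_congr rfl fun a _ => by rw [hsym b a]; ring
        _ = w r * (B r b * w b) := by rw [hB]; ring
    rw [Finset.sum_congr rfl fun b _ => h2 b, ← Finset.mul_sum]
    rfl
  rw [step1]
  have hcs := Finset.sum_mul_sq_le_sq_mul_sq Finset.univ w (B.mulVec w)
  have h3 : ∑ r, w r * B.mulVec w r ≤ e2 w * e2 (B.mulVec w) := by
    have hle : ∑ r, w r * B.mulVec w r ≤ |∑ r, w r * B.mulVec w r| := le_abs_self _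
    have habs : |∑ r, w r * B.mulVec w r| = Real.sqrt ((∑ r, w r * B.mulVec w r) ^ 2) :=
      (Real.sqrt_sq_eq_abs _).symm
    rw [habs] at hle
    refine le_trans hle ?_
    rw [show e2 w * e2 (B.mulVec w) = Real.sqrt ((∑ r, w r ^ 2) * ∑ r, (B.mulVec w r) ^ 2) by
      rw [Real.sqrt_mul (Finset.sum_nonneg fun r _ => sq_nonneg _)]; rfl]
    exact Real.sqrt_le_sqrt hcs
  refine le_trans h3 ?_
  have h4 := e2_mulVec_le B w
  calc e2 w * e2 (B.mulVec w) ≤ e2 w * (opNorm B * e2 w) :=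
        mul_le_mul_of_nonneg_left h4 (e2_nonneg w)
    _ = opNorm B * (e2 w) ^ 2 := by ring
    _ = opNorm B * ∑ r, w r ^ 2 := by rw [e2_sq]

end Helpers

/-- Theorem: deterministic operator norm bound `‖A_{qh}^◇‖₂ ≤ ‖A₀‖₂‖B₀‖₂`. -/
theorem Adm_opNorm_le
    (n m : ℕ) (hn : 0 < n) (hm : 0 < m)
    (A : Matrix (Fin m) (Fin m) ℝ) (B : Matrix (Fin n) (Fin n) ℝ)
    (Asq : Matrix (Fin m) (Fin m) ℝ) (Bsq : Matrix (Fin n) (Fin n) ℝ)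
    (hA : A.PosDef) (hB : B.PosDef)
    (hAsq : Asq.PosDef) (hAsqA : Asq * Asq = A)
    (hBsq : Bsq.PosDef) (hBsqB : Bsq * Bsq = B)
    (U : Matrix (Fin n) (Fin m) ℝ) (hU : ∀ i k, U i k = 0 ∨ U i k = 1)
    (q h : Fin n → ℝ) (hq : e2 q = 1) (hh : e2 h = 1) :
    opNorm (Adm (fun i => fun r => Bsq r i) (fun k => fun s => Asq s k) U q h) ≤
      opNorm A * opNorm B := by
  have hBsym : ∀ i j, Bsq i j = Bsq j i := by
    intro i j
    conv_lhs => rw [← hBsq.1]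
    simp [Matrix.conjTranspose_apply]
  have hAsym : ∀ i j, Asq i j = Asq j i := by
    intro i j
    conv_lhs => rw [← hAsq.1]
    simp [Matrix.conjTranspose_apply]
  have hq1 : ∑ i, q i ^ 2 = 1 := by
    have := e2_sq q; rw [hq] at this; simpa using this.symm
  have hh1 : ∑ i, h i ^ 2 = 1 := by
    have := e2_sq h; rw [hh] at this; simpa using this.symm
  set M := Adm (fun i => fun r => Bsq r i) (fun k => fun s => Asq s k) U q h with hM
  have hent : ∀ p p' : Fin n × Fin m, M p p' = (1/2) * ∑ k, ∑ i, ∑ j,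
      (if i = j then 0 else U i k * U j k * (q i * h j + q j * h i))
        * (Bsq p.1 i * Bsq p'.1 j * (Asq p.2 k * Asq p'.2 k)) := by
    intro p p'
    simp only [hM, Adm, Matrix.smul_apply, Matrix.sum_apply, Matrix.kroneckerMap_apply,
      Matrix.vecMulVec_apply, smul_eq_mul]
  refine opNorm_le_of_quad M (mul_nonneg (opNorm_nonneg A) (opNorm_nonneg B)) ?_ ?_
  · -- symmetry
    intro p p'
    rw [hent, hent]
    congr 1
    refine Finset.sum_congr rfl fun k _ => ?_
    rw [Finset.sum_comm]
    refine Finset.sum_congr rfl fun a _ => Finset.sum_congr rfl fun b _ => ?_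
    rcases eq_or_ne a b with rfl | hne
    · simp
    · rw [if_neg (Ne.symm hne), if_neg hne]
      ring
  · -- quadratic form bound
    intro x
    set y : Fin n → Fin m → ℝ := fun i k => ∑ p : Fin n × Fin m, x p * Bsq p.1 i * Asq p.2 k
      with hy
    have claim1 : ∀ p p' : Fin n × Fin m, x p * M p p' * x p'
        = ∑ k, ∑ i, ∑ j, (1/2) * ((if i = j then 0 else U i k * U j k * (q i * h j + q j * h i))
            * ((x p * Bsq p.1 i * Asq p.2 k) * (x p' * Bsq p'.1 j * Asq p'.2 k))) := by
      intro p p'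
      rw [hent]
      rw [show x p * ((1/2) * ∑ k, ∑ i, ∑ j,
          (if i = j then 0 else U i k * U j k * (q i * h j + q j * h i))
            * (Bsq p.1 i * Bsq p'.1 j * (Asq p.2 k * Asq p'.2 k))) * x p'
        = ∑ k, ∑ i, ∑ j, x p * ((1/2) *
          ((if i = j then 0 else U i k * U j k * (q i * h j + q j * h i))
            * (Bsq p.1 i * Bsq p'.1 j * (Asq p.2 k * Asq p'.2 k)))) * x p' by
          simp only [Finset.mul_sum, Finset.sum_mul]]
      refine Finset.sum_congr rfl fun k _ => Finset.sum_congr rfl fun i _ =>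
        Finset.sum_congr rfl fun j _ => ?_
      ring
    have claim2 : (∑ p, ∑ p', x p * M p p' * x p')
        = ∑ k, ∑ i, ∑ j, ∑ p, ∑ p',
            (1/2) * ((if i = j then 0 else U i k * U j k * (q i * h j + q j * h i))
            * ((x p * Bsq p.1 i * Asq p.2 k) * (x p' * Bsq p'.1 j * Asq p'.2 k))) := by
      rw [Finset.sum_congr rfl fun p _ => Finset.sum_congr rfl fun p' _ => claim1 p p']
      exact sum_swap5 _
    have claim3 : ∀ (k : Fin m) (i j : Fin n), (∑ p, ∑ p',
          (1/2) * ((if i = j then 0 else U i k * U j k * (q i * h j + q j * h i))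
            * ((x p * Bsq p.1 i * Asq p.2 k) * (x p' * Bsq p'.1 j * Asq p'.2 k))))
        = (1/2) * ((if i = j then 0 else U i k * U j k * (q i * h j + q j * h i))
            * (y i k * y j k)) := by
      intro k i j
      rw [hy]
      simp only []
      rw [Finset.sum_mul_sum (f := fun p : Fin n × Fin m => x p * Bsq p.1 i * Asq p.2 k)
        (g := fun p' : Fin n × Fin m => x p' * Bsq p'.1 j * Asq p'.2 k)]
      simp only [Finset.mul_sum]
    have claim4 : (∑ p, ∑ p', x p * M p p' * x p')
        = ∑ k, ((∑ i, q i * (U i k * y i k)) * (∑ i, h i * (U i k * y i k))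
            - ∑ i, q i * h i * (U i k * y i k) ^ 2) := by
      rw [claim2]
      refine Finset.sum_congr rfl fun k _ => ?_
      rw [Finset.sum_congr rfl fun i _ => Finset.sum_congr rfl fun j _ => claim3 k i j]
      have : (∑ i, ∑ j, (1/2) * ((if i = j then 0 else U i k * U j k * (q i * h j + q j * h i))
            * (y i k * y j k)))
          = (1/2) * ∑ i, ∑ j, ((if i = j then 0 else U i k * U j k * (q i * h j + q j * h i))
            * (y i k * y j k)) := by
        rw [Finset.mul_sum]
        exact Finset.sum_congr rfl fun i _ => by rw [Finset.mul_sum]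
      rw [this, key_k (fun i => U i k) q h (fun i => y i k)]
      ring
    rw [claim4]
    have step1 : |∑ k, ((∑ i, q i * (U i k * y i k)) * (∑ i, h i * (U i k * y i k))
            - ∑ i, q i * h i * (U i k * y i k) ^ 2)|
        ≤ ∑ k, ∑ i, (y i k) ^ 2 := by
      refine le_trans (Finset.abs_sum_le_sum_abs _ _) (Finset.sum_le_sum fun k _ => ?_)
      refine le_trans (bound_k q h (fun i => U i k * y i k) hq1 hh1) ?_
      refine Finset.sum_le_sum fun i _ => ?_
      show (U i k * y i k) ^ 2 ≤ y i k ^ 2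
      rcases hU i k with h0 | h1
      · rw [h0]; simpa using sq_nonneg (y i k)
      · rw [h1]; simp
    refine le_trans step1 ?_
    -- now bound ∑ k ∑ i (y i k)^2
    set g : Fin n → Fin m → ℝ := fun r k => ∑ s, x (r, s) * Asq s k with hg
    have hyg : ∀ i k, y i k = ∑ r, Bsq r i * g r k := by
      intro i k
      rw [hy]
      simp only []
      rw [Fintype.sum_prod_type]
      refine Finset.sum_congr rfl fun r _ => ?_
      rw [hg]
      simp only []
      rw [Finset.mul_sum]
      exact Finset.sum_congr rfl fun s _ => by ring
    have step2 : ∑ k, ∑ i, (y i k) ^ 2 ≤ opNorm B * ∑ k, ∑ r, (g r k) ^ 2 := by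
      rw [Finset.mul_sum]
      refine Finset.sum_le_sum fun k _ => ?_
      rw [Finset.sum_congr rfl fun i _ => by rw [hyg i k]]
      exact sqsum_mulVec_le Bsq B hBsym hBsqB (fun r => g r k)
    have step3 : ∑ k, ∑ r, (g r k) ^ 2 ≤ opNorm A * ∑ p : Fin n × Fin m, x p ^ 2 := by
      rw [Finset.sum_comm]
      have : ∀ r, ∑ k, (g r k) ^ 2 ≤ opNorm A * ∑ s, x (r, s) ^ 2 := by
        intro r
        have hgr : ∀ k, g r k = ∑ s, Asq s k * x (r, s) := by
          intro k; rw [hg]; exact Finset.sum_congr rfl fun s _ => by ring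
        rw [Finset.sum_congr rfl fun k _ => by rw [hgr k]]
        exact sqsum_mulVec_le Asq A hAsym hAsqA (fun s => x (r, s))
      refine le_trans (Finset.sum_le_sum fun r _ => this r) ?_
      rw [← Finset.mul_sum, Fintype.sum_prod_type]
    calc ∑ k, ∑ i, (y i k) ^ 2 ≤ opNorm B * ∑ k, ∑ r, (g r k) ^ 2 := step2
      _ ≤ opNorm B * (opNorm A * ∑ p : Fin n × Fin m, x p ^ 2) :=
          mul_le_mul_of_nonneg_left step3 (opNorm_nonneg B)
      _ = opNorm A * opNorm B * ∑ p : Fin n × Fin m, x p ^ 2 := by ring
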